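/- arXiv:2011.11463 — 2 statements merged into one kernel-verified Lean document; each statement's English description precedes it below -/
import Mathlib

section
/- Expected total cost of the online scheduling algorithm is bounded by the primal objective of the primal–dual algorithm: when u is drawn uniformly from [0,1), E[J(s, Alg. 2)] ≤ Σ_{t=1}^T (Σ_{k=1}^M C_k x_k(t) + (1/N) Σ_{i=1}^N Σ_{j=1}^t z_{i,j}(t)), where the right side uses the final values computed by Alg. 1. -/
open scoped Classical
open MeasureTheory

noncomputable section

/-- Age of information of user `i` under schedule `d`:
`a_i(0) = 0`, and `a_i(t) = 0` if `1_{i,d(t)}(t) = 1`, `a_i(t) = a_i(t-1) + 1` otherwise. -/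
def age (ind : ℕ → ℕ → ℕ → ℝ) (d : ℕ → ℕ) (i : ℕ) : ℕ → ℕ
  | 0 => 0
  | t + 1 => if ind i (d (t + 1)) (t + 1) = 1 then 0 else age ind d i t + 1

/-- Inner loop of Alg. 1 at a fixed slot: `innerLoop Ck θ ps j` is the value of the current
slot's `x`-variable after processing iterations `1, …, j`, where `ps j` is the (final)
contribution `Σ_{τ=j}^{t-1} x_{k*_τ}(τ)` of the earlier slots.  At iteration `j` the current
value of `Σ_{τ=j}^{t} x_{k*_τ}(τ)` is `ps j + innerLoop Ck θ ps (j-1)`; if it is `< 1`, the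
`x`-variable is increased by `(1/Ck) Σ_{τ=j}^{t} x_{k*_τ}(τ) + 1/(θ·Ck)`. -/
def innerLoop (Ck θ : ℝ) (ps : ℕ → ℝ) : ℕ → ℝ
  | 0 => 0
  | j + 1 =>
      if ps (j + 1) + innerLoop Ck θ ps j < 1 then
        innerLoop Ck θ ps j + (ps (j + 1) + innerLoop Ck θ ps j) / Ck + 1 / (θ * Ck)
      else innerLoop Ck θ ps j

/-- `xvec Ck θ t τ` : the value of `x_{k*_τ}(τ)` after Alg. 1 has processed slots `1, …, t`
(`Ck τ` stands for the cost `C_{k*_τ}` used in slot `τ`). -/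
def xvec (Ck : ℕ → ℝ) (θ : ℝ) : ℕ → ℕ → ℝ
  | 0, _ => 0
  | t + 1, τ =>
      if τ = t + 1 then
        innerLoop (Ck (t + 1)) θ (fun j => ∑ σ ∈ Finset.Ico j (t + 1), xvec Ck θ t σ) (t + 1)
      else xvec Ck θ t τ

/-- Final value of `x_{k*_t}(t)` computed by Alg. 1. -/
def xval (Ck : ℕ → ℝ) (θ : ℝ) (t : ℕ) : ℝ := xvec Ck θ t t

/-- `psFun Ck θ t j = Σ_{σ=j}^{t-1} x_{k*_σ}(σ)` (final values of the slots before `t`). -/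
def psFun (Ck : ℕ → ℝ) (θ : ℝ) (t : ℕ) (j : ℕ) : ℝ :=
  ∑ σ ∈ Finset.Ico j t, xvec Ck θ (t - 1) σ

/-- The update condition of Alg. 1 at iteration `j` of slot `t`: the current value of
`Σ_{τ=j}^{t} x_{k*_τ}(τ)` (earlier slots final, slot `t` after iterations `1,…,j-1`) is `< 1`. -/
def algCond (Ck : ℕ → ℝ) (θ : ℝ) (t j : ℕ) : Prop :=
  psFun Ck θ t j + innerLoop (Ck t) θ (psFun Ck θ t) (j - 1) < 1

/-- Final value of `z_{i,j}(t)` computed by Alg. 1 (it is the same for every user `i`). -/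
def zval (Ck : ℕ → ℝ) (θ : ℝ) (j t : ℕ) : ℝ :=
  if algCond Ck θ t j then
    1 - (psFun Ck θ t j + innerLoop (Ck t) θ (psFun Ck θ t) (j - 1))
  else 0

/-- Final value of `y_{i,j}(t)` computed by Alg. 1 (it is the same for every user `i`). -/
def yval (Ck : ℕ → ℝ) (θ : ℝ) (N : ℕ) (j t : ℕ) : ℝ :=
  if algCond Ck θ t j then 1 / N else 0

/-- `k*_t`: the minimum power level `k ≥ 1` with `1_{i,k}(t) = 1` for every user `i`. -/
def kstar (ind : ℕ → ℕ → ℕ → ℝ) (N : ℕ) (t : ℕ) : ℕ :=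
  sInf {k : ℕ | 1 ≤ k ∧ ∀ i ∈ Finset.Icc 1 N, ind i k t = 1}

/-- `X(t) = Σ_{τ=1}^t min{x_{k*_τ}(τ), 1}`, used by Alg. 2 (so `X(0) = 0`). -/
def bigX (Ck : ℕ → ℝ) (θ : ℝ) (t : ℕ) : ℝ :=
  ∑ τ ∈ Finset.Icc 1 t, min (xval Ck θ τ) 1

/-- Alg. 2 transmits in slot `t` for randomness `u` iff `u + k ∈ [X(t-1), X(t))` for some
integer `k ≥ 0`. -/
def transmits (Ck : ℕ → ℝ) (θ : ℝ) (u : ℝ) (t : ℕ) : Prop :=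
  ∃ k : ℕ, bigX Ck θ (t - 1) ≤ u + k ∧ u + k < bigX Ck θ t

/-- The decision of Alg. 2 in slot `t` for randomness `u`: transmit with power `k*_t`, or idle. -/
def dAlg (ind : ℕ → ℕ → ℕ → ℝ) (N : ℕ) (Ck : ℕ → ℝ) (θ : ℝ) (u : ℝ) (t : ℕ) : ℕ :=
  if transmits Ck θ u t then kstar ind N t else 0

/-- The constant `θ = (1 + 1/C_M)^⌊C_1⌋ − 1` of Alg. 1. -/
def thetaOf (C : ℕ → ℝ) (M : ℕ) : ℝ := (1 + 1 / C M) ^ ⌊C 1⌋ - 1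

/-!
Alg. 2 is randomized rounding with a single uniform offset: slot `t` transmits iff one of the
points `u + k`, `k ∈ ℕ`, lies in `[X(t-1), X(t))`. So slot `t` transmits with probability
`min(x_t, 1) ≤ x_t`, and no slot of `j, …, t` transmits iff no `u + k` lies in `[X(j-1), X(t))`,
which has probability `1 - min(X(t) - X(j-1), 1)`. A transmission at power `k*_t` reaches every
user, so the age of a user at `t` counts the `j ≤ t` such that no slot of `j, …, t` transmits.
On the primal side, `z_{j,t}` is the positive part of `1 - S`, where `S ≤ Σ_{τ=j}^t x_τ` is the
value of that sum when iteration `j` of slot `t` runs (`x_t` only grows during the slot). Since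
`min(·, 1)` is subadditive on `[0, ∞)`, `min(S, 1) ≤ Σ_{τ=j}^t min(x_τ, 1) = X(t) - X(j-1)`,
so `z_{j,t}` dominates the probability that no slot of `j, …, t` transmits.
-/

open Finset

theorem min_sum_le_sum_min_one {ι : Type*} (s : Finset ι) {f : ι → ℝ} (hf : ∀ i ∈ s, 0 ≤ f i) :
    min (∑ i ∈ s, f i) 1 ≤ ∑ i ∈ s, min (f i) 1 := by
  induction s using Finset.cons_induction with
  | empty => simp
  | cons a s ha ih =>
    rw [sum_cons, sum_cons]
    have hs := ih fun i hi => hf i (mem_cons_of_mem hi)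
    have ha0 := hf a (mem_cons_self a s)
    have hs0 : 0 ≤ ∑ i ∈ s, f i := sum_nonneg fun i hi => hf i (mem_cons_of_mem hi)
    have : min (f a + ∑ i ∈ s, f i) 1 ≤ min (f a) 1 + min (∑ i ∈ s, f i) 1 := by
      simp only [min_def]; split_ifs <;> linarith
    linarith

theorem exists_le_lt_succ {α : Type*} [LinearOrder α] (f : ℕ → α) {v : α} {a b : ℕ}
    (hab : a ≤ b) (ha : f a ≤ v) (hb : v < f b) :
    ∃ n, a ≤ n ∧ n < b ∧ f n ≤ v ∧ v < f (n + 1) := by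
  induction b, hab using Nat.le_induction with
  | base => exact absurd hb (not_lt.2 ha)
  | succ b hab ih =>
    by_cases h : v < f b
    · obtain ⟨n, h1, h2, h3, h4⟩ := ih h
      exact ⟨n, h1, by omega, h3, h4⟩
    · exact ⟨b, hab, by omega, not_lt.1 h, hb⟩

def wrapIco (A B : ℝ) : Set ℝ := {u | ∃ k : ℕ, A ≤ u + k ∧ u + k < B}

theorem measurableSet_wrapIco (A B : ℝ) : MeasurableSet (wrapIco A B) := by
  have : wrapIco A B = ⋃ k : ℕ, Set.Ico (A - k) (B - k) := by
    ext u
    simp only [wrapIco, Set.mem_ofPred_eq, Set.mem_iUnion, Set.mem_Ico, sub_le_iff_le_add,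
      lt_sub_iff_add_lt]
  rw [this]
  exact MeasurableSet.iUnion fun _ => measurableSet_Ico

theorem Ico_subset_wrapIco {A B : ℝ} (hA : 0 ≤ A) (hAB : A + 1 ≤ B) :
    Set.Ico (0 : ℝ) 1 ⊆ wrapIco A B := by
  rintro u ⟨hu0, hu1⟩
  have hm := Nat.floor_le hA
  have hm' := Nat.lt_floor_add_one A
  by_cases h : A ≤ u + ⌊A⌋₊
  · exact ⟨⌊A⌋₊, h, by linarith⟩
  · exact ⟨⌊A⌋₊ + 1, by push_cast; linarith, by push_cast; linarith⟩

/-- When `B < A + 1`, only the shifts by `⌊A⌋₊` and `⌊A⌋₊ + 1` meet `[0, 1)`. -/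
theorem wrapIco_inter_Ico_eq_union {A B : ℝ} (hA : 0 ≤ A) (hAB : B < A + 1) :
    wrapIco A B ∩ Set.Ico 0 1 =
      Set.Ico (A - ⌊A⌋₊) (min (B - ⌊A⌋₊) 1) ∪ Set.Ico 0 (B - ⌊A⌋₊ - 1) := by
  have hm := Nat.floor_le hA
  have hm' := Nat.lt_floor_add_one A
  ext u
  simp only [wrapIco, Set.mem_inter_iff, Set.mem_ofPred_eq, Set.mem_Ico, Set.mem_union, lt_min_iff]
  constructor
  · rintro ⟨⟨k, hk, hk'⟩, hu0, hu1⟩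
    have hlo : ⌊A⌋₊ < k + 1 := by exact_mod_cast (show (⌊A⌋₊ : ℝ) < k + 1 by linarith)
    have hhi : k < ⌊A⌋₊ + 2 := by exact_mod_cast (show (k : ℝ) < ⌊A⌋₊ + 2 by linarith)
    obtain rfl | rfl : k = ⌊A⌋₊ ∨ k = ⌊A⌋₊ + 1 := by omega
    · exact Or.inl ⟨by linarith, by linarith, hu1⟩
    · push_cast at hk'
      exact Or.inr ⟨hu0, by linarith⟩
  · rintro (⟨h, h', hu1⟩ | ⟨hu0, h⟩)
    · exact ⟨⟨⌊A⌋₊, by linarith, by linarith⟩, by linarith, hu1⟩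
    · exact ⟨⟨⌊A⌋₊ + 1, by push_cast; linarith, by push_cast; linarith⟩, hu0, by linarith⟩

theorem volume_wrapIco_inter_Ico {A B : ℝ} (hA : 0 ≤ A) :
    volume (wrapIco A B ∩ Set.Ico 0 1) = ENNReal.ofReal (min (B - A) 1) := by
  rcases le_or_gt (A + 1) B with h | h
  · rw [Set.inter_eq_right.2 (Ico_subset_wrapIco hA h), Real.volume_Ico,
      min_eq_right (by linarith), sub_zero]
  have hm := Nat.floor_le hA
  have hm' := Nat.lt_floor_add_one A
  have hdisj : Disjoint (Set.Ico (A - ⌊A⌋₊) (min (B - ⌊A⌋₊) 1)) (Set.Ico 0 (B - ⌊A⌋₊ - 1)) :=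
    Set.disjoint_left.2 fun u hu hu' => by linarith [hu.1, hu'.2, min_le_left (B - ⌊A⌋₊) 1]
  rw [wrapIco_inter_Ico_eq_union hA h, measure_union hdisj measurableSet_Ico, Real.volume_Ico,
    Real.volume_Ico, min_eq_left (show B - A ≤ 1 by linarith)]
  rcases le_total (B - ⌊A⌋₊) 1 with hb | hb
  · rw [min_eq_left hb, ENNReal.ofReal_of_nonpos (by linarith : B - ⌊A⌋₊ - 1 - 0 ≤ 0), add_zero]
    congr 1; ring
  · rw [min_eq_right hb, ← ENNReal.ofReal_add (by linarith) (by linarith)]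
    congr 1; ring

theorem measureReal_wrapIco {A B : ℝ} (hA : 0 ≤ A) (hAB : A ≤ B) :
    (volume.restrict (Set.Ico (0 : ℝ) 1)).real (wrapIco A B) = min (B - A) 1 := by
  rw [measureReal_restrict_apply (measurableSet_wrapIco A B), measureReal_def,
    volume_wrapIco_inter_Ico hA, ENNReal.toReal_ofReal (le_min (sub_nonneg.2 hAB) zero_le_one)]

section InnerLoop

variable {c θ : ℝ} {ps : ℕ → ℝ}

theorem innerLoop_le_succ (hc : 0 ≤ c) (hθ : 0 ≤ θ) (hps : ∀ j, 0 ≤ ps j) {j : ℕ}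
    (hj : 0 ≤ innerLoop c θ ps j) : innerLoop c θ ps j ≤ innerLoop c θ ps (j + 1) := by
  rw [innerLoop]
  split_ifs
  · have : 0 ≤ (ps (j + 1) + innerLoop c θ ps j) / c := div_nonneg (add_nonneg (hps _) hj) hc
    have : 0 ≤ 1 / (θ * c) := one_div_nonneg.2 (mul_nonneg hθ hc)
    linarith
  · rfl

theorem innerLoop_nonneg (hc : 0 ≤ c) (hθ : 0 ≤ θ) (hps : ∀ j, 0 ≤ ps j) (j : ℕ) :
    0 ≤ innerLoop c θ ps j := by
  induction j with
  | zero => exact le_rfl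
  | succ j ih => exact ih.trans (innerLoop_le_succ hc hθ hps ih)

theorem innerLoop_monotone (hc : 0 ≤ c) (hθ : 0 ≤ θ) (hps : ∀ j, 0 ≤ ps j) :
    Monotone (innerLoop c θ ps) :=
  monotone_nat_of_le_succ fun j => innerLoop_le_succ hc hθ hps (innerLoop_nonneg hc hθ hps j)

end InnerLoop

section PrimalDual

variable {Ck : ℕ → ℝ} {θ : ℝ}

theorem xvec_of_le {t τ : ℕ} (h : τ ≤ t) : xvec Ck θ t τ = xval Ck θ τ := by
  induction t with
  | zero => obtain rfl := Nat.le_zero.1 h; rfl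
  | succ t ih =>
    rcases h.eq_or_lt with rfl | h
    · rfl
    · rw [xvec, if_neg h.ne, ih (Nat.le_of_lt_succ h)]

theorem xvec_nonneg (hC : ∀ t, 0 ≤ Ck t) (hθ : 0 ≤ θ) (t τ : ℕ) : 0 ≤ xvec Ck θ t τ := by
  induction t generalizing τ with
  | zero => exact le_rfl
  | succ t ih =>
    rw [xvec]
    split_ifs
    · exact innerLoop_nonneg (hC _) hθ (fun j => sum_nonneg fun σ _ => ih σ) _
    · exact ih τ

theorem xval_nonneg (hC : ∀ t, 0 ≤ Ck t) (hθ : 0 ≤ θ) (t : ℕ) : 0 ≤ xval Ck θ t :=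
  xvec_nonneg hC hθ t t

theorem psFun_eq_sum_xval (t j : ℕ) : psFun Ck θ t j = ∑ σ ∈ Ico j t, xval Ck θ σ :=
  sum_congr rfl fun σ hσ => xvec_of_le (by have := (mem_Ico.1 hσ).2; omega)

theorem xval_eq_innerLoop {t : ℕ} (ht : 1 ≤ t) :
    xval Ck θ t = innerLoop (Ck t) θ (psFun Ck θ t) t := by
  obtain ⟨s, rfl⟩ := Nat.exists_eq_add_of_le' ht
  rw [xval, xvec, if_pos rfl]
  rfl

theorem zval_eq_max (j t : ℕ) :
    zval Ck θ j t = max 0 (1 - (psFun Ck θ t j + innerLoop (Ck t) θ (psFun Ck θ t) (j - 1))) := by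
  unfold zval algCond
  split_ifs with h
  · exact (max_eq_right (by linarith)).symm
  · exact (max_eq_left (by linarith)).symm

theorem one_sub_min_sum_le_zval (hC : ∀ t, 0 ≤ Ck t) (hθ : 0 ≤ θ) {j t : ℕ} (hj : 1 ≤ j)
    (hjt : j ≤ t) : 1 - min (∑ τ ∈ Icc j t, min (xval Ck θ τ) 1) 1 ≤ zval Ck θ j t := by
  have hx := xval_nonneg hC hθ
  have hps : ∀ i, 0 ≤ psFun Ck θ t i := fun i => by
    rw [psFun_eq_sum_xval]; exact sum_nonneg fun σ _ => hx σ
  have hsum : psFun Ck θ t j + xval Ck θ t = ∑ τ ∈ Icc j t, xval Ck θ τ := by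
    rw [psFun_eq_sum_xval, ← Ico_add_one_right_eq_Icc, sum_Ico_succ_top hjt]
  set P := psFun Ck θ t j
  set I := innerLoop (Ck t) θ (psFun Ck θ t) (j - 1)
  have hI : I ≤ xval Ck θ t := by
    rw [xval_eq_innerLoop (hj.trans hjt)]; exact innerLoop_monotone (hC _) hθ hps (by omega)
  have hmin := min_sum_le_sum_min_one (Icc j t) fun τ _ => hx τ
  have key : min (P + I) 1 ≤ min (∑ τ ∈ Icc j t, min (xval Ck θ τ) 1) 1 :=
    le_min ((min_le_min_right 1 (by linarith)).trans hmin) (min_le_right _ _)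
  rw [zval_eq_max]
  rcases le_total (P + I) 1 with h | h
  · rw [min_eq_left h] at key; exact le_max_of_le_right (by linarith)
  · rw [min_eq_right h] at key; exact le_max_of_le_left (by linarith)

end PrimalDual

theorem kstar_spec (ind : ℕ → ℕ → ℕ → ℝ) (N M t : ℕ) (hM : 1 ≤ M) (hcov : ∀ i, ind i M t = 1) :
    1 ≤ kstar ind N t ∧ kstar ind N t ≤ M ∧ ∀ i ∈ Icc 1 N, ind i (kstar ind N t) t = 1 := by
  have hmem : M ∈ {k : ℕ | 1 ≤ k ∧ ∀ i ∈ Icc 1 N, ind i k t = 1} := ⟨hM, fun i _ => hcov i⟩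
  obtain ⟨h1, h2⟩ := Nat.sInf_mem ⟨M, hmem⟩
  exact ⟨h1, Nat.sInf_le hmem, h2⟩

theorem thetaOf_nonneg {C : ℕ → ℝ} {M : ℕ} (h1 : 0 ≤ C 1) (hM : 0 ≤ C M) : 0 ≤ thetaOf C M :=
  sub_nonneg.2 (one_le_zpow₀ (le_add_of_nonneg_right (one_div_nonneg.2 hM)) (Int.floor_nonneg.2 h1))

section BigX

variable {Ck : ℕ → ℝ} {θ : ℝ}

theorem bigX_nonneg (hx : ∀ τ, 0 ≤ xval Ck θ τ) (t : ℕ) : 0 ≤ bigX Ck θ t :=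
  sum_nonneg fun τ _ => le_min (hx τ) zero_le_one

theorem bigX_monotone (hx : ∀ τ, 0 ≤ xval Ck θ τ) : Monotone (bigX Ck θ) := fun _ _ h =>
  sum_le_sum_of_subset_of_nonneg (Icc_subset_Icc le_rfl h) fun τ _ _ => le_min (hx τ) zero_le_one

theorem bigX_sub_bigX {j t : ℕ} (hj : 1 ≤ j) (hjt : j ≤ t) :
    bigX Ck θ t - bigX Ck θ (j - 1) = ∑ τ ∈ Icc j t, min (xval Ck θ τ) 1 := by
  obtain ⟨i, rfl⟩ : ∃ i, j = i + 1 := ⟨j - 1, by omega⟩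
  have hIcc : ∀ n, Icc 1 n = Ioc 0 n := Icc_add_one_left_eq_Ioc 0
  rw [bigX, bigX, Nat.add_sub_cancel, hIcc, hIcc, Icc_add_one_left_eq_Ioc,
    ← sum_Ioc_consecutive _ i.zero_le (by omega : i ≤ t), add_sub_cancel_left]

end BigX

theorem age_eq_card (ind : ℕ → ℕ → ℕ → ℝ) (d : ℕ → ℕ) (i t : ℕ) :
    age ind d i t = #{j ∈ Icc 1 t | ∀ τ ∈ Icc j t, ind i (d τ) τ ≠ 1} := by
  induction t with
  | zero => rfl
  | succ t ih =>
    rw [age]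
    split_ifs with h
    · refine (card_eq_zero.2 (filter_eq_empty_iff.2 fun j hj hall => ?_)).symm
      exact hall (t + 1) (mem_Icc.2 ⟨(mem_Icc.1 hj).2, le_rfl⟩) h
    · rw [ih, ← insert_Icc_right_eq_Icc_add_one (by omega), filter_insert,
        if_pos (by simpa using h), card_insert_of_notMem (by simp)]
      congr 2
      refine filter_congr fun j hj => ?_
      rw [← insert_Icc_right_eq_Icc_add_one (by simp at hj; omega), forall_mem_insert,
        and_iff_right h]

section Alg2

variable {ind : ℕ → ℕ → ℕ → ℝ} {N : ℕ} {Ck : ℕ → ℝ} {θ : ℝ}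

theorem exists_transmits_iff (hx : ∀ τ, 0 ≤ xval Ck θ τ) {j t : ℕ} (hj : 1 ≤ j) (hjt : j ≤ t)
    (u : ℝ) :
    (∃ τ ∈ Icc j t, transmits Ck θ u τ) ↔ u ∈ wrapIco (bigX Ck θ (j - 1)) (bigX Ck θ t) := by
  constructor
  · rintro ⟨τ, hτ, k, hk, hk'⟩
    obtain ⟨hjτ, hτt⟩ := mem_Icc.1 hτ
    exact ⟨k, (bigX_monotone hx (by omega)).trans hk, hk'.trans_le (bigX_monotone hx hτt)⟩
  · rintro ⟨k, hk, hk'⟩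
    obtain ⟨n, h1, h2, h3, h4⟩ := exists_le_lt_succ (bigX Ck θ) (by omega : j - 1 ≤ t) hk hk'
    exact ⟨n + 1, mem_Icc.2 ⟨by omega, by omega⟩, k, h3, h4⟩

theorem setOf_forall_not_transmits (hx : ∀ τ, 0 ≤ xval Ck θ τ) {j t : ℕ} (hj : 1 ≤ j)
    (hjt : j ≤ t) :
    {u | ∀ τ ∈ Icc j t, ¬transmits Ck θ u τ} = (wrapIco (bigX Ck θ (j - 1)) (bigX Ck θ t))ᶜ := by
  ext u
  rw [Set.mem_compl_iff, ← exists_transmits_iff hx hj hjt]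
  simp

theorem measureReal_transmits (hx : ∀ τ, 0 ≤ xval Ck θ τ) {t : ℕ} (ht : 1 ≤ t) :
    (volume.restrict (Set.Ico (0 : ℝ) 1)).real {u | transmits Ck θ u t} = min (xval Ck θ t) 1 := by
  have h := bigX_sub_bigX (Ck := Ck) (θ := θ) ht le_rfl
  rw [Icc_self, sum_singleton] at h
  rw [show {u | transmits Ck θ u t} = wrapIco _ _ from rfl,
    measureReal_wrapIco (bigX_nonneg hx _) (bigX_monotone hx (Nat.sub_le t 1)), h,
    min_eq_left (min_le_right _ _)]

theorem measureReal_forall_not_transmits (hx : ∀ τ, 0 ≤ xval Ck θ τ) {j t : ℕ} (hj : 1 ≤ j)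
    (hjt : j ≤ t) :
    (volume.restrict (Set.Ico (0 : ℝ) 1)).real {u | ∀ τ ∈ Icc j t, ¬transmits Ck θ u τ} =
      1 - min (∑ τ ∈ Icc j t, min (xval Ck θ τ) 1) 1 := by
  rw [setOf_forall_not_transmits hx hj hjt, measureReal_compl (measurableSet_wrapIco _ _),
    measureReal_wrapIco (bigX_nonneg hx _) (bigX_monotone hx (by omega)), bigX_sub_bigX hj hjt]
  simp

theorem cost_dAlg_eq_indicator {C : ℕ → ℝ} (hC0 : C 0 = 0) (u : ℝ) (t : ℕ) :
    C (dAlg ind N Ck θ u t) =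
      {u | transmits Ck θ u t}.indicator (fun _ => C (kstar ind N t)) u := by
  by_cases h : transmits Ck θ u t <;> simp [dAlg, h, hC0]

theorem age_dAlg_eq_sum_indicator {i : ℕ} (hzero : ∀ t, ind i 0 t = 0)
    (hk : ∀ t, ind i (kstar ind N t) t = 1) (u : ℝ) (t : ℕ) :
    (age ind (dAlg ind N Ck θ u) i t : ℝ) =
      ∑ j ∈ Icc 1 t, {u | ∀ τ ∈ Icc j t, ¬transmits Ck θ u τ}.indicator 1 u := by
  have hd : ∀ τ, ind i (dAlg ind N Ck θ u τ) τ = 1 ↔ transmits Ck θ u τ := fun τ => by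
    by_cases h : transmits Ck θ u τ <;> simp [dAlg, h, hk, hzero]
  rw [age_eq_card, natCast_card_filter]
  simp only [ne_eq, hd, Set.indicator_apply, Set.mem_ofPred_eq, Pi.one_apply]

theorem measurableSet_transmits (t : ℕ) : MeasurableSet {u | transmits Ck θ u t} :=
  measurableSet_wrapIco _ _

theorem measurableSet_forall_not_transmits (hx : ∀ τ, 0 ≤ xval Ck θ τ) {j t : ℕ} (hj : 1 ≤ j)
    (hjt : j ≤ t) : MeasurableSet {u | ∀ τ ∈ Icc j t, ¬transmits Ck θ u τ} := by
  rw [setOf_forall_not_transmits hx hj hjt]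
  exact (measurableSet_wrapIco _ _).compl

theorem integrable_cost_dAlg {C : ℕ → ℝ} (hC0 : C 0 = 0) (t : ℕ) :
    Integrable (fun u => C (dAlg ind N Ck θ u t)) (volume.restrict (Set.Ico 0 1)) := by
  simp_rw [cost_dAlg_eq_indicator hC0]
  exact (integrable_const _).indicator (measurableSet_transmits t)

theorem integral_cost_dAlg {C : ℕ → ℝ} (hC0 : C 0 = 0) (hx : ∀ τ, 0 ≤ xval Ck θ τ) {t : ℕ}
    (ht : 1 ≤ t) :
    ∫ u in Set.Ico 0 1, C (dAlg ind N Ck θ u t) = min (xval Ck θ t) 1 * C (kstar ind N t) := by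
  simp_rw [cost_dAlg_eq_indicator hC0]
  rw [integral_indicator_const _ (measurableSet_transmits t), measureReal_transmits hx ht,
    smul_eq_mul]

theorem integrable_age_dAlg {i : ℕ} (hzero : ∀ t, ind i 0 t = 0)
    (hk : ∀ t, ind i (kstar ind N t) t = 1) (hx : ∀ τ, 0 ≤ xval Ck θ τ) (t : ℕ) :
    Integrable (fun u => (age ind (dAlg ind N Ck θ u) i t : ℝ))
      (volume.restrict (Set.Ico 0 1)) := by
  simp_rw [age_dAlg_eq_sum_indicator hzero hk]
  exact integrable_finsetSum _ fun j hj => (integrable_const 1).indicator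
    (measurableSet_forall_not_transmits hx (mem_Icc.1 hj).1 (mem_Icc.1 hj).2)

theorem integral_age_dAlg {i : ℕ} (hzero : ∀ t, ind i 0 t = 0)
    (hk : ∀ t, ind i (kstar ind N t) t = 1) (hx : ∀ τ, 0 ≤ xval Ck θ τ) (t : ℕ) :
    ∫ u in Set.Ico 0 1, (age ind (dAlg ind N Ck θ u) i t : ℝ) =
      ∑ j ∈ Icc 1 t, (1 - min (∑ τ ∈ Icc j t, min (xval Ck θ τ) 1) 1) := by
  simp_rw [age_dAlg_eq_sum_indicator hzero hk]
  have hmeas : ∀ j ∈ Icc 1 t, MeasurableSet {u | ∀ τ ∈ Icc j t, ¬transmits Ck θ u τ} :=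
    fun j hj => measurableSet_forall_not_transmits hx (mem_Icc.1 hj).1 (mem_Icc.1 hj).2
  rw [integral_finsetSum _ fun j hj => (integrable_const 1).indicator (hmeas j hj)]
  refine sum_congr rfl fun j hj => ?_
  rw [integral_indicator_one (hmeas j hj),
    measureReal_forall_not_transmits hx (mem_Icc.1 hj).1 (mem_Icc.1 hj).2]

end Alg2

theorem stmt13_general (N M T : ℕ) (hM : 1 ≤ M)
    (ind : ℕ → ℕ → ℕ → ℝ)
    (hcov : ∀ i t, ind i M t = 1)
    (hzero : ∀ i t, ind i 0 t = 0)
    (C : ℕ → ℝ) (hC0 : C 0 = 0) (hC1 : 1 ≤ C 1)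
    (hCmono : ∀ k k', 1 ≤ k → k ≤ k' → k' ≤ M → C k ≤ C k') :
    (∫ u in Set.Ico (0 : ℝ) 1,
        ∑ t ∈ Finset.Icc 1 T,
          (C (dAlg ind N (fun τ => C (kstar ind N τ)) (thetaOf C M) u t)
            + (1 / N) * ∑ i ∈ Finset.Icc 1 N,
                (age ind (dAlg ind N (fun τ => C (kstar ind N τ)) (thetaOf C M) u) i t : ℝ)))
      ≤ ∑ t ∈ Finset.Icc 1 T,
          (∑ k ∈ Finset.Icc 1 M,
              C k * (if k = kstar ind N t then
                  xval (fun τ => C (kstar ind N τ)) (thetaOf C M) t else 0)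
            + (1 / N) * ∑ i ∈ Finset.Icc 1 N, ∑ j ∈ Finset.Icc 1 t,
                zval (fun τ => C (kstar ind N τ)) (thetaOf C M) j t) := by
  set K : ℕ → ℝ := fun τ => C (kstar ind N τ)
  have hks t := kstar_spec ind N M t hM (hcov · t)
  have hK : ∀ t, 0 ≤ K t := fun t =>
    (zero_le_one.trans hC1).trans (hCmono 1 _ le_rfl (hks t).1 (hks t).2.1)
  have hθ : 0 ≤ thetaOf C M :=
    thetaOf_nonneg (by linarith) (by linarith [hCmono 1 M le_rfl hM le_rfl])
  have hx := xval_nonneg hK hθ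
  have hage i (hi : i ∈ Icc 1 N) := integrable_age_dAlg (hzero i) (fun t => (hks t).2.2 i hi) hx
  have hageSum t := (integrable_finsetSum _ fun i hi => hage i hi t).const_mul (1 / (N : ℝ))
  refine (integral_finsetSum _ fun t _ => ?_).trans_le (sum_le_sum fun t ht => ?_)
  · exact (integrable_cost_dAlg hC0 t).add (hageSum t)
  rw [integral_add (integrable_cost_dAlg hC0 t) (hageSum t), integral_const_mul,
    integral_finsetSum _ fun i hi => hage i hi t, integral_cost_dAlg hC0 hx (mem_Icc.1 ht).1]
  simp only [mul_ite, mul_zero, sum_ite_eq', mem_Icc.2 ⟨(hks t).1, (hks t).2.1⟩, if_true]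
  gcongr ?_ + _ * ?_
  · rw [mul_comm]
    exact mul_le_mul_of_nonneg_left (min_le_left _ _) (hK t)
  · refine sum_le_sum fun i hi => ?_
    rw [integral_age_dAlg (hzero i) (fun t => (hks t).2.2 i hi) hx]
    exact sum_le_sum fun j hj =>
      one_sub_min_sum_le_zval hK hθ (mem_Icc.1 hj).1 (mem_Icc.1 hj).2

/-- the expected total cost of Alg. 2 (with `u` uniform on `[0,1)`) is at most
the primal objective value computed by Alg. 1. -/
theorem stmt13 (N M T : ℕ) (hN : 1 ≤ N) (hM : 1 ≤ M) (hT : 1 ≤ T)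
    (ind : ℕ → ℕ → ℕ → ℝ)
    (hind01 : ∀ i k t, ind i k t = 0 ∨ ind i k t = 1)
    (hmono : ∀ i k k' t, k ≤ k' → ind i k t = 1 → ind i k' t = 1)
    (hcov : ∀ i t, ind i M t = 1)
    (hzero : ∀ i t, ind i 0 t = 0)
    (C : ℕ → ℝ) (hC0 : C 0 = 0) (hC1 : 1 ≤ C 1)
    (hCmono : ∀ k k', 1 ≤ k → k ≤ k' → k' ≤ M → C k ≤ C k') :
    (∫ u in Set.Ico (0 : ℝ) 1,
        ∑ t ∈ Finset.Icc 1 T,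
          (C (dAlg ind N (fun τ => C (kstar ind N τ)) (thetaOf C M) u t)
            + (1 / N) * ∑ i ∈ Finset.Icc 1 N,
                (age ind (dAlg ind N (fun τ => C (kstar ind N τ)) (thetaOf C M) u) i t : ℝ)))
      ≤ ∑ t ∈ Finset.Icc 1 T,
          (∑ k ∈ Finset.Icc 1 M,
              C k * (if k = kstar ind N t then
                  xval (fun τ => C (kstar ind N τ)) (thetaOf C M) t else 0)
            + (1 / N) * ∑ i ∈ Finset.Icc 1 N, ∑ j ∈ Finset.Icc 1 t,
                zval (fun τ => C (kstar ind N τ)) (thetaOf C M) j t) :=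
  stmt13_general N M T hM ind hcov hzero C hC0 hC1 hCmono

end
end

section
/- Channel-agnostic competitive ratio: modify the algorithm by fixing k*_t = M for every slot t (in both the x-update recursion and the transmission decision, so that every transmission uses power level M and cost C_M). Then for every channel state pattern satisfying the assumptions, when u is drawn uniformly from [0,1), the expected total cost of the channel-agnostic algorithm satisfies E[J(s, channel-agnostic)] ≤ (1 + 1/((1 + 1/C_M)^⌊C_1⌋ − 1)) · OPT(s). -/
open scoped Classical
open MeasureTheory

noncomputable section

/-- The decision of the channel-agnostic algorithm in slot `t` for randomness `u`:
transmit with the maximum power level `M`, or idle. -/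
def dCA (M : ℕ) (Ck : ℕ → ℝ) (θ : ℝ) (u : ℝ) (t : ℕ) : ℕ :=
  if transmits Ck θ u t then M else 0


/-!
Alg. 1 is an online primal-dual algorithm. Whenever iteration `j` of slot `t` fires
(`Σ_{τ=j}^{t} x(τ) < 1`), the dual variable of the window `[j, t]` is raised by `1` and the
fractional primal cost `C_M x(t) + Σ_j z_j(t)` grows by exactly `1 + 1/θ`; so the fractional cost
is `(1 + 1/θ)` times the dual objective. The dual is feasible: after `m` fired windows containing a
slot `τ`, the mass `Σ_{σ ≥ τ} x(σ)` is at least `((1 + 1/C_M)^m - 1)/θ`, and it is below `1` before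
each firing, so at most `⌊C_1⌋` fired windows contain `τ`; weak duality bounds the dual objective
by the cost of any schedule. Finally, the rounding with one uniform `u` transmits in slot `t` with
probability at most `min (x t) 1` and leaves a window `[j, t]` idle with probability at most
`z_j(t)`, so its expected cost is at most the fractional cost.
-/

namespace ChannelAgnostic

section Counting

open Finset

lemma card_filter_Icc_one_succ (p : ℕ → Prop) [DecidablePred p] (n : ℕ) :
    #{i ∈ Icc 1 (n + 1) | p i} = #{i ∈ Icc 1 n | p i} + if p (n + 1) then 1 else 0 := by
  rw [card_filter, card_filter, sum_Icc_succ_top (by omega)]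

lemma min_sum_le_sum_min {ι : Type*} (s : Finset ι) {f : ι → ℝ} (hf : ∀ i ∈ s, 0 ≤ f i) :
    min (∑ i ∈ s, f i) 1 ≤ ∑ i ∈ s, min (f i) 1 := by
  have hmin : ∀ x y : ℝ, 0 ≤ x → 0 ≤ y → min (x + y) 1 ≤ min x 1 + min y 1 := by
    intro x y hx hy
    simp only [min_def]
    split_ifs <;> linarith
  induction s using Finset.cons_induction with
  | empty => simp
  | cons a s ha ih =>
    rw [forall_mem_cons] at hf
    rw [sum_cons, sum_cons]
    calc _ ≤ min (f a) 1 + min (∑ i ∈ s, f i) 1 := hmin _ _ hf.1 (sum_nonneg hf.2)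
      _ ≤ _ := by gcongr; exact ih hf.2

lemma sum_Icc_sum_Icc_sum_Icc_comm {β : Type*} [AddCommMonoid β] (T : ℕ)
    (f : ℕ → ℕ → ℕ → β) :
    ∑ t ∈ Icc 1 T, ∑ j ∈ Icc 1 t, ∑ τ ∈ Icc j t, f t j τ
      = ∑ τ ∈ Icc 1 T, ∑ t ∈ Icc τ T, ∑ j ∈ Icc 1 τ, f t j τ := by
  rw [sum_congr rfl fun t _ => sum_comm' (t' := Icc 1 t) (s' := Icc 1) fun j τ => by
    simp only [mem_Icc]; omega]
  exact sum_comm' fun t τ => by simp only [mem_Icc]; omega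

lemma age_eq_card (ind : ℕ → ℕ → ℕ → ℝ) (d : ℕ → ℕ) (i t : ℕ) :
    age ind d i t = #{j ∈ Icc 1 t | ∀ τ ∈ Icc j t, ind i (d τ) τ ≠ 1} := by
  induction t with
  | zero => rfl
  | succ t ih =>
    have hwin : ∀ j ≤ t + 1, (∀ τ ∈ Icc j (t + 1), ind i (d τ) τ ≠ 1) ↔
        ind i (d (t + 1)) (t + 1) ≠ 1 ∧ ∀ τ ∈ Icc j t, ind i (d τ) τ ≠ 1 := fun j hj => by
      rw [← insert_Icc_right_eq_Icc_add_one hj, forall_mem_insert]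
    rw [filter_congr fun j hj => hwin j (mem_Icc.1 hj).2, age]
    by_cases h : ind i (d (t + 1)) (t + 1) = 1
    · simp [h]
    · simp only [h, if_false, ne_eq, not_false_eq_true, true_and]
      rw [card_filter_Icc_one_succ, ih, if_pos]
      simp

end Counting

section InnerLoop

open Finset

variable {c θ : ℝ} {ps : ℕ → ℝ}

lemma innerLoop_succ (j : ℕ) :
    innerLoop c θ ps (j + 1) = if ps (j + 1) + innerLoop c θ ps j < 1 then
      innerLoop c θ ps j + (ps (j + 1) + innerLoop c θ ps j) / c + 1 / (θ * c)
    else innerLoop c θ ps j := rfl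

lemma innerLoop_nonneg (hc : 0 < c) (hθ : 0 < θ) (hps : ∀ j, 0 ≤ ps j) (n : ℕ) :
    0 ≤ innerLoop c θ ps n := by
  induction n with
  | zero => rfl
  | succ n ih =>
    rw [innerLoop_succ]
    split_ifs
    · have := hps (n + 1)
      positivity
    · exact ih

lemma innerLoop_mono (hc : 0 < c) (hθ : 0 < θ) (hps : ∀ j, 0 ≤ ps j) :
    Monotone (innerLoop c θ ps) := by
  refine monotone_nat_of_le_succ fun n => ?_
  rw [innerLoop_succ]
  split_ifs
  · have := hps (n + 1)
    have := innerLoop_nonneg hc hθ hps n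
    have : 0 ≤ (ps (n + 1) + innerLoop c θ ps n) / c + 1 / (θ * c) := by positivity
    linarith
  · exact le_rfl

/-- A firing iteration with current window sum `S` adds `S + 1/θ` to `c·x` and sets `z_j = 1 - S`.
-/
lemma mul_innerLoop_add_sum (hc : 0 < c) (hθ : 0 < θ) (n : ℕ) :
    c * innerLoop c θ ps n
        + ∑ j ∈ Icc 1 n,
            (if ps j + innerLoop c θ ps (j - 1) < 1 then 1 - (ps j + innerLoop c θ ps (j - 1))
             else 0)
      = (1 + 1 / θ) * #{j ∈ Icc 1 n | ps j + innerLoop c θ ps (j - 1) < 1} := by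
  induction n with
  | zero => simp [innerLoop]
  | succ n ih =>
    rw [sum_Icc_succ_top (by omega), card_filter_Icc_one_succ, innerLoop_succ,
      Nat.add_sub_cancel]
    split_ifs
    · have hstep : c * ((ps (n + 1) + innerLoop c θ ps n) / c + 1 / (θ * c))
          = ps (n + 1) + innerLoop c θ ps n + 1 / θ := by field_simp
      push_cast
      linear_combination ih + hstep
    · simpa using ih

end InnerLoop

section Primal

open Finset

variable {Ck : ℕ → ℝ} {θ : ℝ}

lemma xvec_of_le {t τ : ℕ} (h : τ ≤ t) : xvec Ck θ t τ = xval Ck θ τ := by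
  induction t with
  | zero => rw [Nat.le_zero.1 h]; rfl
  | succ t ih =>
    rcases eq_or_lt_of_le h with rfl | h
    · rfl
    · rw [xvec, if_neg h.ne, ih (by omega)]

lemma psFun_eq_sum (t j : ℕ) : psFun Ck θ t j = ∑ σ ∈ Ico j t, xval Ck θ σ :=
  sum_congr rfl fun σ hσ => xvec_of_le (by simp at hσ; omega)

lemma xval_eq_innerLoop (t : ℕ) : xval Ck θ t = innerLoop (Ck t) θ (psFun Ck θ t) t := by
  cases t with
  | zero => rfl
  | succ t => rw [xval, xvec, if_pos rfl]; rfl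

lemma xval_nonneg (hc : ∀ t, 0 < Ck t) (hθ : 0 < θ) (t : ℕ) : 0 ≤ xval Ck θ t := by
  induction t using Nat.strong_induction_on with
  | _ t ih =>
    rw [xval_eq_innerLoop]
    refine innerLoop_nonneg (hc t) hθ (fun j => ?_) t
    rw [psFun_eq_sum]
    exact sum_nonneg fun σ hσ => ih σ (by simp at hσ; omega)

lemma psFun_nonneg (hc : ∀ t, 0 < Ck t) (hθ : 0 < θ) (t j : ℕ) : 0 ≤ psFun Ck θ t j := by
  rw [psFun_eq_sum]
  exact sum_nonneg fun σ _ => xval_nonneg hc hθ σ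

lemma mul_xval_add_sum_zval (t : ℕ) (hc : 0 < Ck t) (hθ : 0 < θ) :
    Ck t * xval Ck θ t + ∑ j ∈ Icc 1 t, zval Ck θ j t
      = (1 + 1 / θ) * #{j ∈ Icc 1 t | algCond Ck θ t j} := by
  rw [xval_eq_innerLoop]
  convert mul_innerLoop_add_sum (ps := psFun Ck θ t) hc hθ t using 4
  · unfold zval algCond
    congr
  · rfl

lemma zval_eq (j t : ℕ) :
    zval Ck θ j t = 1 - min (psFun Ck θ t j + innerLoop (Ck t) θ (psFun Ck θ t) (j - 1)) 1 := by
  unfold zval algCond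
  split_ifs with h
  · rw [min_eq_left h.le]
  · rw [min_eq_right (not_lt.1 h), sub_self]

lemma psFun_succ {τ n : ℕ} (h : τ ≤ n) :
    psFun Ck θ (n + 1) τ = psFun Ck θ n τ + xval Ck θ n := by
  rw [psFun_eq_sum, psFun_eq_sum, sum_Ico_succ_top h]

lemma bigX_mono (hc : ∀ t, 0 < Ck t) (hθ : 0 < θ) : Monotone (bigX Ck θ) := fun _ _ h =>
  sum_le_sum_of_subset_of_nonneg (Icc_subset_Icc_right h) fun τ _ _ =>
    le_min (xval_nonneg hc hθ τ) zero_le_one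

lemma bigX_nonneg (hc : ∀ t, 0 < Ck t) (hθ : 0 < θ) (t : ℕ) : 0 ≤ bigX Ck θ t :=
  bigX_mono hc hθ (Nat.zero_le t)

lemma bigX_sub_bigX {j t : ℕ} (hj : 1 ≤ j) (hjt : j ≤ t + 1) :
    bigX Ck θ t - bigX Ck θ (j - 1) = ∑ τ ∈ Icc j t, min (xval Ck θ τ) 1 := by
  obtain ⟨i, rfl⟩ := Nat.exists_eq_add_of_le' hj
  have hIoc : ∀ n, Icc 1 n = Ioc 0 n := fun n => Icc_add_one_left_eq_Ioc 0 n
  simp only [bigX, Nat.add_sub_cancel, hIoc, Icc_add_one_left_eq_Ioc]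
  rw [← sum_Ioc_consecutive _ (Nat.zero_le i) (by omega), add_sub_cancel_left]

lemma one_sub_min_le_zval (hc : ∀ t, 0 < Ck t) (hθ : 0 < θ) {j t : ℕ} (hj : 1 ≤ j)
    (hjt : j ≤ t) : 1 - min (bigX Ck θ t - bigX Ck θ (j - 1)) 1 ≤ zval Ck θ j t := by
  have hps : ∀ i, 0 ≤ psFun Ck θ t i := psFun_nonneg hc hθ t
  have hL : innerLoop (Ck t) θ (psFun Ck θ t) (j - 1) ≤ xval Ck θ t := by
    rw [xval_eq_innerLoop]
    exact innerLoop_mono (hc t) hθ hps (by omega)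
  have hsum : psFun Ck θ t j + xval Ck θ t = ∑ τ ∈ Icc j t, xval Ck θ τ := by
    rw [psFun_eq_sum, ← Ico_add_one_right_eq_Icc, sum_Ico_succ_top hjt]
  rw [zval_eq, bigX_sub_bigX hj (by omega)]
  gcongr 1 - ?_
  calc _ ≤ min (∑ τ ∈ Icc j t, xval Ck θ τ) 1 := by gcongr; linarith
    _ ≤ _ := le_min (min_sum_le_sum_min _ fun τ _ => xval_nonneg hc hθ τ) (min_le_right _ _)

end Primal

section Dual

open Finset

variable {c θ : ℝ} {K : ℕ}

def potential (c θ : ℝ) (m : ℕ) : ℝ := ((1 + 1 / c) ^ m - 1) / θ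

lemma potential_succ (hc : 0 < c) (hθ : 0 < θ) (m : ℕ) :
    potential c θ (m + 1) = (1 + 1 / c) * potential c θ m + 1 / (θ * c) := by
  unfold potential
  rw [pow_succ]
  field_simp
  ring

lemma lt_of_potential_lt_one (hc : 0 < c) (hθ : 0 < θ) (hθK : θ = (1 + 1 / c) ^ K - 1)
    {m : ℕ} (h : potential c θ m < 1) : m < K := by
  rw [potential, div_lt_one hθ, hθK, sub_lt_sub_iff_right] at h
  exact (pow_lt_pow_iff_right₀ (by simp [hc])).1 h

/-- A firing iteration `i ≤ τ` sees `V := Σ_{σ=τ}^{t} x(σ) ≤ Σ_{σ=i}^{t} x(σ) < 1` and raises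
`V` to at least `(1 + 1/c) V + 1/(θ c)`; so after `m` firings `V ≥ potential c θ m`, and
`potential c θ m < 1` forces `m < K`. -/
lemma innerLoop_potential (hc : 0 < c) (hθ : 0 < θ) (hθK : θ = (1 + 1 / c) ^ K - 1)
    {ps : ℕ → ℝ} {τ : ℕ} (hanti : ∀ j ≤ τ, ps τ ≤ ps j)
    {m : ℕ} (hm : m ≤ K) (hg : potential c θ m ≤ ps τ) {j : ℕ} (hj : j ≤ τ) :
    m + #{i ∈ Icc 1 j | ps i + innerLoop c θ ps (i - 1) < 1} ≤ K ∧
      potential c θ (m + #{i ∈ Icc 1 j | ps i + innerLoop c θ ps (i - 1) < 1})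
        ≤ ps τ + innerLoop c θ ps j := by
  induction j with
  | zero => simpa [innerLoop] using ⟨hm, hg⟩
  | succ j ih =>
    obtain ⟨ihK, ihg⟩ := ih (by omega)
    rw [card_filter_Icc_one_succ, innerLoop_succ, Nat.add_sub_cancel]
    split_ifs with hfire
    · have hlt := lt_of_potential_lt_one hc hθ hθK
        (ihg.trans_lt (by linarith [hanti (j + 1) hj]))
      refine ⟨by omega, ?_⟩
      rw [← add_assoc, potential_succ hc hθ]
      have hdiv : (ps τ + innerLoop c θ ps j) / c ≤ (ps (j + 1) + innerLoop c θ ps j) / c := by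
        gcongr
        exact hanti (j + 1) hj
      have hmul := mul_le_mul_of_nonneg_left ihg (by positivity : (0 : ℝ) ≤ 1 + 1 / c)
      linarith [show (1 + 1 / c) * (ps τ + innerLoop c θ ps j)
        = ps τ + innerLoop c θ ps j + (ps τ + innerLoop c θ ps j) / c by ring]
    · simpa using ⟨ihK, ihg⟩

/-- Dual feasibility: every slot `τ` lies in at most `K` windows `[j, t]` on which the
algorithm raised the dual variables. -/
lemma sum_card_algCond_le (hc : 0 < c) (hθ : 0 < θ) (hθK : θ = (1 + 1 / c) ^ K - 1)
    (τ T : ℕ) : ∑ t ∈ Icc τ T, #{j ∈ Icc 1 τ | algCond (fun _ => c) θ t j} ≤ K := by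
  have hx := xval_nonneg (Ck := fun _ => c) (fun _ => hc) hθ
  have hps := psFun_nonneg (Ck := fun _ => c) (fun _ => hc) hθ
  have key : ∀ n, τ ≤ n →
      ∑ t ∈ Ico τ n, #{j ∈ Icc 1 τ | algCond (fun _ => c) θ t j} ≤ K ∧
        potential c θ (∑ t ∈ Ico τ n, #{j ∈ Icc 1 τ | algCond (fun _ => c) θ t j})
          ≤ psFun (fun _ => c) θ n τ := by
    intro n hn
    induction n, hn using Nat.le_induction with
    | base => simp [potential, psFun]
    | succ n hn ih =>
      have hanti : ∀ j ≤ τ, psFun (fun _ => c) θ n τ ≤ psFun (fun _ => c) θ n j := by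
        intro j hj
        simp only [psFun_eq_sum]
        exact sum_le_sum_of_subset_of_nonneg (Ico_subset_Ico_left hj) fun σ _ _ => hx σ
      obtain ⟨hK, hg⟩ := innerLoop_potential hc hθ hθK hanti ih.1 ih.2 le_rfl
      have hL : innerLoop c θ (psFun (fun _ => c) θ n) τ ≤ xval (fun _ => c) θ n := by
        rw [xval_eq_innerLoop]
        exact innerLoop_mono hc hθ (hps n) (by omega)
      rw [sum_Ico_succ_top hn, psFun_succ hn]
      exact ⟨hK, hg.trans (by linarith)⟩
  rcases le_or_gt τ (T + 1) with h | h
  · simpa only [Ico_add_one_right_eq_Icc] using (key (T + 1) h).1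
  · simp [Icc_eq_empty_of_lt (show T < τ by omega)]

/-- Weak duality for the dual solution that puts weight `1` on each window `[j, t]` with `E t j`:
a window containing a transmission of `d` is charged to it (at most `K` windows per transmission,
each transmission costing at least `K`), an idle window is charged to the age of every user. -/
lemma sum_card_le_cost {N T K : ℕ} (hN : 1 ≤ N) {ind : ℕ → ℕ → ℕ → ℝ}
    (hzero : ∀ i t, ind i 0 t = 0) {C : ℕ → ℝ} (hC0 : C 0 = 0) {d : ℕ → ℕ}
    (hcost : ∀ t, 1 ≤ d t → (K : ℝ) ≤ C (d t)) (E : ℕ → ℕ → Prop)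
    (hcover : ∀ τ, ∑ t ∈ Icc τ T, #{j ∈ Icc 1 τ | E t j} ≤ K) :
    ∑ t ∈ Icc 1 T, (#{j ∈ Icc 1 t | E t j} : ℝ)
      ≤ ∑ t ∈ Icc 1 T, (C (d t) + 1 / N * ∑ i ∈ Icc 1 N, (age ind d i t : ℝ)) := by
  let busy (t j : ℕ) : Prop := ∃ τ ∈ Icc j t, 1 ≤ d τ
  have hsplit : ∀ t, #{j ∈ Icc 1 t | E t j}
      = #{j ∈ Icc 1 t | E t j ∧ busy t j} + #{j ∈ Icc 1 t | E t j ∧ ¬ busy t j} := fun t => by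
    rw [← filter_filter, ← filter_filter, card_filter_add_card_filter_not]
  have hbusy : (∑ t ∈ Icc 1 T, #{j ∈ Icc 1 t | E t j ∧ busy t j} : ℝ)
      ≤ ∑ t ∈ Icc 1 T, C (d t) := by
    have hcount : ∑ t ∈ Icc 1 T, #{j ∈ Icc 1 t | E t j ∧ busy t j}
        ≤ ∑ τ ∈ Icc 1 T, ∑ t ∈ Icc τ T, ∑ j ∈ Icc 1 τ, if E t j ∧ 1 ≤ d τ then 1 else 0 := by
      rw [← sum_Icc_sum_Icc_sum_Icc_comm]
      refine sum_le_sum fun t _ => ?_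
      rw [card_filter]
      refine sum_le_sum fun j _ => ?_
      split_ifs with h
      · obtain ⟨hE, τ, hτ, hd⟩ := h
        exact single_le_sum (f := fun τ => if E t j ∧ 1 ≤ d τ then 1 else 0)
          (fun _ _ => Nat.zero_le _) hτ |>.trans' (by simp [hE, hd])
      · exact Nat.zero_le _
    rw [← Nat.cast_sum]
    refine (Nat.cast_le (α := ℝ) |>.2 hcount).trans ?_
    push_cast
    refine sum_le_sum fun τ _ => ?_
    by_cases hd : 1 ≤ d τ
    · simpa [hd, ← card_filter] using (Nat.cast_le.2 (hcover τ)).trans (hcost τ hd)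
    · simp [show d τ = 0 by omega, hC0]
  have hidle : ∀ t, (#{j ∈ Icc 1 t | E t j ∧ ¬ busy t j} : ℝ)
      ≤ 1 / N * ∑ i ∈ Icc 1 N, (age ind d i t : ℝ) := by
    intro t
    have hage : ∀ i, #{j ∈ Icc 1 t | E t j ∧ ¬ busy t j} ≤ age ind d i t := fun i => by
      rw [age_eq_card]
      refine card_le_card fun j hj => ?_
      simp only [mem_filter, busy, not_exists, not_and, not_le, Nat.lt_one_iff] at hj ⊢
      exact ⟨hj.1, fun τ hτ => by simp [hj.2.2 τ hτ, hzero]⟩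
    have hN' : (0 : ℝ) < N := by exact_mod_cast hN
    rw [div_mul_eq_mul_div, one_mul, le_div_iff₀ hN']
    calc _ = ∑ _i ∈ Icc 1 N, (#{j ∈ Icc 1 t | E t j ∧ ¬ busy t j} : ℝ) := by simp [mul_comm]
      _ ≤ _ := sum_le_sum fun i _ => by exact_mod_cast hage i
  simp only [hsplit, Nat.cast_add, sum_add_distrib]
  exact add_le_add hbusy (sum_le_sum fun t _ => hidle t)

end Dual

section HitSet

open Set
open scoped Function

def hitSet (I : Set ℝ) : Set ℝ := {u | ∃ k : ℕ, u + k ∈ I}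

lemma hitSet_eq_iUnion (I : Set ℝ) : hitSet I = ⋃ k : ℕ, (· + (k : ℝ)) ⁻¹' I := by
  ext u
  simp [hitSet]

lemma measurableSet_hitSet {I : Set ℝ} (hI : MeasurableSet I) : MeasurableSet (hitSet I) := by
  rw [hitSet_eq_iUnion]
  exact .iUnion fun k => measurable_add_const _ hI

lemma hitSet_mono {I J : Set ℝ} (h : I ⊆ J) : hitSet I ⊆ hitSet J :=
  fun _ ⟨k, hk⟩ => ⟨k, h hk⟩

instance isProbabilityMeasure_restrict_Ico :
    IsProbabilityMeasure (volume.restrict (Ico (0 : ℝ) 1)) :=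
  ⟨by simp⟩

lemma iUnion_Ico_natCast_add_one : ⋃ k : ℕ, Ico (k : ℝ) (k + 1) = Ici 0 := by
  ext x
  simp only [mem_iUnion, mem_Ico, mem_Ici]
  refine ⟨fun ⟨k, hk, _⟩ => (Nat.cast_nonneg k).trans hk, fun hx => ?_⟩
  exact ⟨⌊x⌋₊, Nat.floor_le hx, Nat.lt_floor_add_one x⟩

lemma restrict_Ico_preimage_add_natCast {I : Set ℝ} (hI : MeasurableSet I) (k : ℕ) :
    volume.restrict (Ico 0 1) ((· + (k : ℝ)) ⁻¹' I) = volume (I ∩ Ico (k : ℝ) (k + 1)) := by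
  have : (· + (k : ℝ)) ⁻¹' I ∩ Ico 0 1 = (· + (k : ℝ)) ⁻¹' (I ∩ Ico (k : ℝ) (k + 1)) := by
    rw [preimage_inter, preimage_add_const_Ico, sub_self, add_sub_cancel_left]
  rw [Measure.restrict_apply (measurable_add_const _ hI), this, measure_preimage_add_right]

lemma tsum_restrict_Ico_preimage_add_natCast {I : Set ℝ} (hI : MeasurableSet I) (h0 : I ⊆ Ici 0) :
    ∑' k : ℕ, volume.restrict (Ico 0 1) ((· + (k : ℝ)) ⁻¹' I) = volume I := by
  have hdisj : Pairwise (Disjoint on fun k : ℕ => Ico (k : ℝ) (k + 1)) := by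
    simpa using (Nat.mono_cast (α := ℝ)).pairwise_disjoint_on_Ico_succ
  simp_rw [restrict_Ico_preimage_add_natCast hI]
  rw [← measure_iUnion (hdisj.mono fun _ _ h => h.mono inter_subset_right inter_subset_right)
    fun _ => hI.inter measurableSet_Ico, ← inter_iUnion, iUnion_Ico_natCast_add_one,
    inter_eq_left.2 h0]

/-- An interval of length at most `1` meets `u + ℕ` at most once, so the pieces are disjoint. -/
lemma restrict_Ico_hitSet_eq {a b : ℝ} (ha : 0 ≤ a) (hb : b ≤ a + 1) :
    volume.restrict (Ico 0 1) (hitSet (Ico a b)) = ENNReal.ofReal (b - a) := by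
  have hdisj : Pairwise (Disjoint on fun k : ℕ => (· + (k : ℝ)) ⁻¹' Ico a b) := by
    intro k k' hne
    rw [Function.onFun, Set.disjoint_left]
    rintro u ⟨h1, h2⟩ ⟨h3, h4⟩
    have hk : k < k' + 1 := by exact_mod_cast (by linarith : (k : ℝ) < k' + 1)
    have hk' : k' < k + 1 := by exact_mod_cast (by linarith : (k' : ℝ) < k + 1)
    exact hne (by omega)
  rw [hitSet_eq_iUnion, measure_iUnion hdisj fun _ => measurable_add_const _ measurableSet_Ico,
    tsum_restrict_Ico_preimage_add_natCast measurableSet_Ico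
      (Ico_subset_Ici_self.trans (Ici_subset_Ici.2 ha)), Real.volume_Ico]

lemma measureReal_restrict_Ico_hitSet_le {a b : ℝ} (ha : 0 ≤ a) (hab : a ≤ b) :
    (volume.restrict (Ico 0 1)).real (hitSet (Ico a b)) ≤ b - a := by
  refine ENNReal.toReal_le_of_le_ofReal (sub_nonneg.2 hab) ?_
  rw [hitSet_eq_iUnion, ← Real.volume_Ico, ← tsum_restrict_Ico_preimage_add_natCast
    measurableSet_Ico (Ico_subset_Ici_self.trans (Ici_subset_Ici.2 ha))]
  exact measure_iUnion_le _

lemma min_le_measureReal_restrict_Ico_hitSet {a b : ℝ} (ha : 0 ≤ a) :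
    min (b - a) 1 ≤ (volume.restrict (Ico 0 1)).real (hitSet (Ico a b)) := by
  refine (ENNReal.ofReal_le_iff_le_toReal (measure_ne_top _ _)).1 ?_
  calc ENNReal.ofReal (min (b - a) 1)
      = volume.restrict (Ico 0 1) (hitSet (Ico a (min b (a + 1)))) := by
        rw [restrict_Ico_hitSet_eq ha (min_le_right _ _), ← min_sub_sub_right, add_sub_cancel_left]
    _ ≤ _ := measure_mono (hitSet_mono (Ico_subset_Ico_right (min_le_left _ _)))

end HitSet

section Rounding

lemma biUnion_Ico_Ico_add_one {X : ℕ → ℝ} (hX : Monotone X) (m n : ℕ) :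
    ⋃ i ∈ Finset.Ico m n, Set.Ico (X i) (X (i + 1)) = Set.Ico (X m) (X n) := by
  rcases le_total n m with hnm | hmn
  · simp [Finset.Ico_eq_empty_of_le hnm, Set.Ico_eq_empty_of_le (hX hnm)]
  · induction n, hmn using Nat.le_induction with
    | base => simp
    | succ n hmn ih =>
      rw [Nat.Ico_succ_right_eq_insert_Ico hmn, Finset.set_biUnion_insert, ih, Set.union_comm,
        Set.Ico_union_Ico_eq_Ico (hX hmn) (hX n.le_succ)]

variable {Ck : ℕ → ℝ} {θ : ℝ}

/-- The values of `u` for which the rounding transmits in some slot of `(i, t]`. -/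
def transmitSet (Ck : ℕ → ℝ) (θ : ℝ) (i t : ℕ) : Set ℝ :=
  hitSet (Set.Ico (bigX Ck θ i) (bigX Ck θ t))

lemma measurableSet_transmitSet (i t : ℕ) : MeasurableSet (transmitSet Ck θ i t) :=
  measurableSet_hitSet measurableSet_Ico

lemma transmits_iff_mem_transmitSet (u : ℝ) (t : ℕ) :
    transmits Ck θ u t ↔ u ∈ transmitSet Ck θ (t - 1) t := Iff.rfl

lemma exists_transmits_iff (hc : ∀ t, 0 < Ck t) (hθ : 0 < θ) (u : ℝ) {j t : ℕ} (hj : 1 ≤ j) :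
    (∃ τ ∈ Finset.Icc j t, transmits Ck θ u τ) ↔ u ∈ transmitSet Ck θ (j - 1) t := by
  rw [transmitSet, ← biUnion_Ico_Ico_add_one (bigX_mono hc hθ)]
  simp only [transmits_iff_mem_transmitSet, transmitSet, hitSet, Set.mem_iUnion, Finset.mem_Icc,
    Finset.mem_Ico, exists_prop]
  constructor
  · rintro ⟨τ, hτ, k, hk⟩
    exact ⟨k, τ - 1, by omega, by rwa [Nat.sub_add_cancel (by omega)]⟩
  · rintro ⟨k, i, hi, hk⟩
    exact ⟨i + 1, by omega, k, hk⟩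

lemma cost_dCA {C : ℕ → ℝ} (hC0 : C 0 = 0) (M : ℕ) (u : ℝ) (t : ℕ) :
    C (dCA M Ck θ u t) = C M * (transmitSet Ck θ (t - 1) t).indicator 1 u := by
  by_cases h : transmits Ck θ u t
  · rw [dCA, if_pos h, Set.indicator_of_mem ((transmits_iff_mem_transmitSet u t).1 h),
      Pi.one_apply, mul_one]
  · rw [dCA, if_neg h, Set.indicator_of_notMem (mt (transmits_iff_mem_transmitSet u t).2 h), hC0,
      mul_zero]

lemma age_dCA (hc : ∀ t, 0 < Ck t) (hθ : 0 < θ) {ind : ℕ → ℕ → ℕ → ℝ} {M : ℕ}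
    (hcov : ∀ i t, ind i M t = 1) (hzero : ∀ i t, ind i 0 t = 0) (u : ℝ) (i t : ℕ) :
    (age ind (dCA M Ck θ u) i t : ℝ)
      = ∑ j ∈ Finset.Icc 1 t, (transmitSet Ck θ (j - 1) t)ᶜ.indicator 1 u := by
  have hfail : ∀ τ, ind i (dCA M Ck θ u τ) τ ≠ 1 ↔ ¬ transmits Ck θ u τ := fun τ => by
    unfold dCA
    split_ifs with h <;> simp [h, hcov, hzero]
  rw [age_eq_card, Finset.card_filter, Nat.cast_sum]
  refine Finset.sum_congr rfl fun j hj => ?_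
  have hidle : (∀ τ ∈ Finset.Icc j t, ¬ transmits Ck θ u τ) ↔ u ∉ transmitSet Ck θ (j - 1) t := by
    rw [← exists_transmits_iff hc hθ u (Finset.mem_Icc.1 hj).1]
    simp
  simp only [hfail, hidle, Set.indicator_apply, Set.mem_compl_iff, Pi.one_apply]
  split_ifs <;> simp

lemma slot_cost_dCA_eq (hc : ∀ t, 0 < Ck t) (hθ : 0 < θ) {N : ℕ} (hN : 1 ≤ N)
    {ind : ℕ → ℕ → ℕ → ℝ} {M : ℕ} (hcov : ∀ i t, ind i M t = 1) (hzero : ∀ i t, ind i 0 t = 0)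
    {C : ℕ → ℝ} (hC0 : C 0 = 0) (u : ℝ) (t : ℕ) :
    C (dCA M Ck θ u t) + 1 / N * ∑ i ∈ Finset.Icc 1 N, (age ind (dCA M Ck θ u) i t : ℝ)
      = C M * (transmitSet Ck θ (t - 1) t).indicator 1 u
          + ∑ j ∈ Finset.Icc 1 t, (transmitSet Ck θ (j - 1) t)ᶜ.indicator 1 u := by
  have hN' : (N : ℝ) ≠ 0 := by positivity
  simp only [cost_dCA hC0, age_dCA hc hθ hcov hzero, Finset.sum_const, Nat.card_Icc,
    nsmul_eq_mul, Nat.add_sub_cancel]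
  field_simp

lemma integral_slot_cost_le (hc : ∀ t, 0 < Ck t) (hθ : 0 < θ) {c : ℝ} (hc₀ : 0 ≤ c) {t : ℕ}
    (ht : 1 ≤ t) :
    ∫ u in Set.Ico (0 : ℝ) 1, (c * (transmitSet Ck θ (t - 1) t).indicator 1 u
        + ∑ j ∈ Finset.Icc 1 t, (transmitSet Ck θ (j - 1) t)ᶜ.indicator 1 u)
      ≤ c * xval Ck θ t + ∑ j ∈ Finset.Icc 1 t, zval Ck θ j t := by
  have hint : ∀ s, MeasurableSet s → Integrable (s.indicator (1 : ℝ → ℝ))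
      (volume.restrict (Set.Ico (0 : ℝ) 1)) := fun s hs => (integrable_const 1).indicator hs
  have hS := measurableSet_transmitSet (Ck := Ck) (θ := θ)
  have hX := bigX_mono hc hθ
  have hX0 := bigX_nonneg hc hθ
  rw [integral_add ((hint _ (hS _ _)).const_mul _)
      (integrable_finsetSum _ fun j _ => hint _ (hS _ _).compl),
    integral_const_mul, integral_indicator_one (hS _ _),
    integral_finsetSum _ fun j _ => hint _ (hS _ _).compl]
  simp_rw [integral_indicator_one (hS _ _).compl, probReal_compl_eq_one_sub (hS _ _)]
  gcongr with j hj
  · calc _ ≤ bigX Ck θ t - bigX Ck θ (t - 1) :=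
          measureReal_restrict_Ico_hitSet_le (hX0 _) (hX (Nat.sub_le t 1))
      _ = min (xval Ck θ t) 1 := by
          rw [bigX_sub_bigX ht (Nat.le_succ t), Finset.Icc_self, Finset.sum_singleton]
      _ ≤ xval Ck θ t := min_le_left _ _
  · obtain ⟨hj1, hjt⟩ := Finset.mem_Icc.1 hj
    have hidle : min (bigX Ck θ t - bigX Ck θ (j - 1)) 1
        ≤ (volume.restrict (Set.Ico 0 1)).real (transmitSet Ck θ (j - 1) t) :=
      min_le_measureReal_restrict_Ico_hitSet (hX0 _)
    linarith [one_sub_min_le_zval hc hθ hj1 hjt]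

end Rounding

lemma integral_cost_dCA_le {N M T : ℕ} (hN : 1 ≤ N) {ind : ℕ → ℕ → ℕ → ℝ}
    (hcov : ∀ i t, ind i M t = 1) (hzero : ∀ i t, ind i 0 t = 0) {C : ℕ → ℝ} (hC0 : C 0 = 0)
    (hc : 0 < C M) {θ : ℝ} (hθ : 0 < θ) :
    ∫ u in Set.Ico (0 : ℝ) 1, ∑ t ∈ Finset.Icc 1 T,
        (C (dCA M (fun _ => C M) θ u t)
          + 1 / N * ∑ i ∈ Finset.Icc 1 N, (age ind (dCA M (fun _ => C M) θ u) i t : ℝ))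
      ≤ ∑ t ∈ Finset.Icc 1 T,
          (C M * xval (fun _ => C M) θ t + ∑ j ∈ Finset.Icc 1 t, zval (fun _ => C M) θ j t) := by
  have hCk : ∀ t : ℕ, 0 < (fun _ : ℕ => C M) t := fun _ => hc
  have hS := measurableSet_transmitSet (Ck := fun _ : ℕ => C M) (θ := θ)
  simp_rw [slot_cost_dCA_eq hCk hθ hN hcov hzero hC0]
  rw [integral_finsetSum _ fun t _ =>
    (((integrable_const 1).indicator (hS _ _)).const_mul _).add
      (integrable_finsetSum _ fun j _ => (integrable_const 1).indicator (hS _ _).compl)]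
  exact Finset.sum_le_sum fun t ht =>
    integral_slot_cost_le hCk hθ hc.le (Finset.mem_Icc.1 ht).1

end ChannelAgnostic

open ChannelAgnostic Finset

theorem stmt15_general (N M T : ℕ) (hN : 1 ≤ N)
    (ind : ℕ → ℕ → ℕ → ℝ)
    (hcov : ∀ i t, ind i M t = 1)
    (hzero : ∀ i t, ind i 0 t = 0)
    (C : ℕ → ℝ) (hC0 : C 0 = 0) (hC1 : 1 ≤ C 1)
    (hCmono : ∀ k k', 1 ≤ k → k ≤ k' → k' ≤ M → C k ≤ C k') :
    (∫ u in Set.Ico (0 : ℝ) 1,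
        ∑ t ∈ Finset.Icc 1 T,
          (C (dCA M (fun _ => C M) (thetaOf C M) u t)
            + (1 / N) * ∑ i ∈ Finset.Icc 1 N,
                (age ind (dCA M (fun _ => C M) (thetaOf C M) u) i t : ℝ)))
      ≤ (1 + 1 / ((1 + 1 / C M) ^ ⌊C 1⌋ - 1))
          * sInf {c : ℝ | ∃ d : ℕ → ℕ, (∀ t, d t ≤ M) ∧
              c = ∑ t ∈ Finset.Icc 1 T,
                    (C (d t) + (1 / N) * ∑ i ∈ Finset.Icc 1 N, (age ind d i t : ℝ))} := by
  have hM : 1 ≤ M := Nat.one_le_iff_ne_zero.2 fun h => by simpa [h, hzero] using hcov 0 0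
  have hCM : 0 < C M := by linarith [hCmono 1 M le_rfl hM le_rfl]
  set θ := thetaOf C M
  set K := ⌊C 1⌋₊
  have hθK : θ = (1 + 1 / C M) ^ K - 1 := by
    rw [← zpow_natCast, Int.natCast_floor_eq_floor (by linarith)]
    rfl
  have hKC : (K : ℝ) ≤ C 1 := Nat.floor_le (by linarith)
  have hθ : 0 < θ := by
    have := one_lt_pow₀ (by simpa using hCM : 1 < 1 + 1 / C M)
      (Nat.one_le_iff_ne_zero.1 (Nat.le_floor (by simpa using hC1)) : K ≠ 0)
    linarith
  calc _ ≤ ∑ t ∈ Finset.Icc 1 T,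
          (C M * xval (fun _ => C M) θ t + ∑ j ∈ Finset.Icc 1 t, zval (fun _ => C M) θ j t) :=
        integral_cost_dCA_le hN hcov hzero hC0 hCM hθ
    _ = (1 + 1 / θ) * ∑ t ∈ Finset.Icc 1 T,
          (#{j ∈ Finset.Icc 1 t | algCond (fun _ => C M) θ t j} : ℝ) := by
        rw [Finset.mul_sum]
        exact Finset.sum_congr rfl fun t _ => mul_xval_add_sum_zval (Ck := fun _ => C M) t hCM hθ
    _ ≤ _ := by
        refine mul_le_mul_of_nonneg_left ?_ (by positivity)
        refine le_csInf ⟨_, fun _ => M, fun _ => le_rfl, rfl⟩ ?_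
        rintro _ ⟨d, hd, rfl⟩
        exact sum_card_le_cost hN hzero hC0
          (fun t h => hKC.trans (hCmono 1 (d t) le_rfl h (hd t))) _
          fun τ => sum_card_algCond_le hCM hθ hθK τ T

/-- channel-agnostic competitive ratio: fixing `k*_t = M` in every slot (so
the `x`-recursion uses `C_M` and every transmission uses power level `M`), for every channel
state pattern, the expected total cost (over `u` uniform on `[0,1)`) satisfies
`E[J(s, channel-agnostic)] ≤ (1 + 1/((1 + 1/C_M)^⌊C_1⌋ − 1)) · OPT(s)`. -/
theorem stmt15 (N M T : ℕ) (hN : 1 ≤ N) (hM : 1 ≤ M) (hT : 1 ≤ T)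
    (ind : ℕ → ℕ → ℕ → ℝ)
    (hind01 : ∀ i k t, ind i k t = 0 ∨ ind i k t = 1)
    (hmono : ∀ i k k' t, k ≤ k' → ind i k t = 1 → ind i k' t = 1)
    (hcov : ∀ i t, ind i M t = 1)
    (hzero : ∀ i t, ind i 0 t = 0)
    (C : ℕ → ℝ) (hC0 : C 0 = 0) (hC1 : 1 ≤ C 1)
    (hCmono : ∀ k k', 1 ≤ k → k ≤ k' → k' ≤ M → C k ≤ C k') :
    (∫ u in Set.Ico (0 : ℝ) 1,
        ∑ t ∈ Finset.Icc 1 T,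
          (C (dCA M (fun _ => C M) (thetaOf C M) u t)
            + (1 / N) * ∑ i ∈ Finset.Icc 1 N,
                (age ind (dCA M (fun _ => C M) (thetaOf C M) u) i t : ℝ)))
      ≤ (1 + 1 / ((1 + 1 / C M) ^ ⌊C 1⌋ - 1))
          * sInf {c : ℝ | ∃ d : ℕ → ℕ, (∀ t, d t ≤ M) ∧
              c = ∑ t ∈ Finset.Icc 1 T,
                    (C (d t) + (1 / N) * ∑ i ∈ Finset.Icc 1 N, (age ind d i t : ℝ))} :=
  stmt15_general N M T hN ind hcov hzero C hC0 hC1 hCmono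

end
end
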